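/- Turing's fixed-point combinator Θ := θθ with θ := λx.λy.y(x x y) is typable, for every n ≥ 0 and list of linear types A_k,…,A_0 with k ≥ n+1, with the linear type 𝔽ₙ := 𝕋ₙ → Aₙ, at a weight w ≥ (2n+1)·X, where 𝕋₀ = [ [] → A₀ ] and 𝕋_{m+1} = [ [A_m] → A_{m+1}, [𝕋_m] ]. -/

import Mathlib

/-! # Tree intersection types -/

mutual
/-- Linear types: `A ::= ⋆ | T → A`. -/
inductive LinTy : Type where
  | star : LinTy
  | arr : TreeTy → LinTy → LinTy
/-- Generic types: linear types or tree types. -/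
inductive GenTy : Type where
  | lin : LinTy → GenTy
  | tree : TreeTy → GenTy
/-- Tree types: finite sequences of generic types. -/
inductive TreeTy : Type where
  | node : List GenTy → TreeTy
end

mutual
/-- Leaves of a generic type. -/
def GenTy.leaves : GenTy → List LinTy
  | .lin A => [A]
  | .tree T => TreeTy.leaves T
  termination_by g => sizeOf g
/-- Leaves extraction on tree types. -/
def TreeTy.leaves : TreeTy → List LinTy
  | .node gs => gs.attach.flatMap (fun g => GenTy.leaves g.1)
  termination_by T => sizeOf T
  decreasing_by simp_wf; have := List.sizeOf_lt_of_mem g.2; omega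
end

/-- Concatenation `⊎` of tree types (sequences). -/
def TreeTy.cat : TreeTy → TreeTy → TreeTy
  | .node a, .node b => .node (a ++ b)

mutual
/-- Weight (size) of a linear type, with parameter `X`. -/
def LinTy.weight (X : ℕ) : LinTy → ℕ
  | .star => 0
  | .arr T A => max (TreeTy.weight X T) (LinTy.weight X A + 1)
  termination_by A => sizeOf A
def GenTy.weight (X : ℕ) : GenTy → ℕ
  | .lin A => LinTy.weight X A
  | .tree T => TreeTy.weight X T
  termination_by g => sizeOf g
def TreeTy.weight (X : ℕ) : TreeTy → ℕ
  | .node gs => X + (gs.attach.map (fun g => GenTy.weight X g.1)).foldr max 0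
  termination_by T => sizeOf T
  decreasing_by simp_wf; have := List.sizeOf_lt_of_mem g.2; omega
end

mutual
/-- Hereditary absence of empty sequences (every leaf context ends in `⋆`). -/
inductive LinTy.Good : LinTy → Prop where
  | star : LinTy.Good .star
  | arr {T A} : TreeTy.Good T → LinTy.Good A → LinTy.Good (.arr T A)
inductive GenTy.Good : GenTy → Prop where
  | lin {A} : LinTy.Good A → GenTy.Good (.lin A)
  | tree {T} : TreeTy.Good T → GenTy.Good (.tree T)
inductive TreeTy.Good : TreeTy → Prop where
  | node {gs : List GenTy} : gs ≠ [] → (∀ g ∈ gs, GenTy.Good g) → TreeTy.Good (.node gs)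
end

/-! ## Leaf contexts -/

/-- One-hole contexts into tree types whose hole sits at a leaf position. -/
inductive LeafCtx : Type where
  | here (l r : List GenTy) : LeafCtx
  | deeper (l : List GenTy) (L : LeafCtx) (r : List GenTy) : LeafCtx

/-- Plugging a linear type into a leaf context. -/
def LeafCtx.plug : LeafCtx → LinTy → TreeTy
  | .here l r, A => .node (l ++ .lin A :: r)
  | .deeper l L r, A => .node (l ++ .tree (L.plug A) :: r)

/-- Number of leaves strictly to the left of the hole. -/
def LeafCtx.holeIdx : LeafCtx → ℕ
  | .here l _ => (TreeTy.node l).leaves.length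
  | .deeper l L _ => (TreeTy.node l).leaves.length + L.holeIdx

/-! ## Type contexts -/

mutual
/-- Linear type contexts: `𝕃c ::= ⟨·⟩ | T → 𝕃c | 𝕋 → A`. -/
inductive LinCtx : Type where
  | hole : LinCtx
  | arrR : TreeTy → LinCtx → LinCtx
  | arrL : TreeCtx → LinTy → LinCtx
/-- Tree type contexts. -/
inductive TreeCtx : Type where
  | node : List GenTy → GenCtx → List GenTy → TreeCtx
/-- Generic type contexts. -/
inductive GenCtx : Type where
  | lin : LinCtx → GenCtx
  | tree : TreeCtx → GenCtx
end

mutual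
def LinCtx.plug : LinCtx → LinTy → LinTy
  | .hole, B => B
  | .arrR T C, B => .arr T (C.plug B)
  | .arrL C A, B => .arr (C.plug B) A
def TreeCtx.plug : TreeCtx → LinTy → TreeTy
  | .node l C r, B => .node (l ++ C.plug B :: r)
def GenCtx.plug : GenCtx → LinTy → GenTy
  | .lin C, B => .lin (C.plug B)
  | .tree C, B => .tree (C.plug B)
end

mutual
/-- Branch size of a linear type context. -/
def LinCtx.bsize (X : ℕ) : LinCtx → ℕ
  | .hole => 0
  | .arrR _ C => 1 + C.bsize X
  | .arrL C _ => C.bsize X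
def TreeCtx.bsize (X : ℕ) : TreeCtx → ℕ
  | .node _ C _ => X + C.bsize X
def GenCtx.bsize (X : ℕ) : GenCtx → ℕ
  | .lin C => C.bsize X
  | .tree C => C.bsize X
end

/-! # λ-terms (de Bruijn) and Closed Call-by-Name -/

inductive Term : Type where
  | var : ℕ → Term
  | lam : Term → Term
  | app : Term → Term → Term

/-- Shifting of free indices `≥ c` by `d`. -/
def Term.lift (d : ℕ) : ℕ → Term → Term
  | c, .var n => if n < c then .var n else .var (n + d)
  | c, .lam t => .lam (Term.lift d (c+1) t)
  | c, .app t u => .app (Term.lift d c t) (Term.lift d c u)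

/-- Capture-avoiding substitution of `u` for index `k`. -/
def Term.subst (u : Term) : ℕ → Term → Term
  | k, .var n => if n = k then Term.lift k 0 u else if k < n then .var (n-1) else .var n
  | k, .lam t => .lam (Term.subst u (k+1) t)
  | k, .app t s => .app (Term.subst u k t) (Term.subst u k s)

/-- `t{x₀ := u}`. -/
def Term.subst0 (t u : Term) : Term := Term.subst u 0 t

def Term.ClosedUnder : Term → ℕ → Prop
  | .var n, k => n < k
  | .lam t, k => t.ClosedUnder (k+1)
  | .app t u, k => t.ClosedUnder k ∧ u.ClosedUnder k

/-- Closed terms: no free variables. -/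
def Term.Closed (t : Term) : Prop := t.ClosedUnder 0

/-- Occurrence of a free variable. -/
def Term.FreeIn : Term → ℕ → Prop
  | .var n, x => n = x
  | .lam t, x => t.FreeIn (x+1)
  | .app t u, x => t.FreeIn x ∨ u.FreeIn x

/-- Weak head reduction `(λy.t)u r₁…r_h →wh t{y:=u} r₁…r_h`. -/
inductive Whr : Term → Term → Prop where
  | beta (t u : Term) : Whr (.app (.lam t) u) (t.subst0 u)
  | appL {t t' : Term} (u : Term) : Whr t t' → Whr (.app t u) (.app t' u)

/-- `n`-step weak head reduction. -/
inductive WhN : ℕ → Term → Term → Prop where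
  | refl (t : Term) : WhN 0 t t
  | step {n t u v} : Whr t u → WhN n u v → WhN (n+1) t v

/-! # Type environments and the tree type system -/

/-- Type environments: maps from (de Bruijn) variables to tree types. -/
def Env : Type := ℕ → TreeTy

def Env.empty : Env := fun _ => .node []

/-- Pointwise concatenation `Γ ⊎ Δ`. -/
def Env.union (Γ Δ : Env) : Env := fun x => (Γ x).cat (Δ x)

/-- Environment of the variable axiom: `x : [A]`. -/
def Env.single (x : ℕ) (A : LinTy) : Env :=
  fun y => if y = x then .node [.lin A] else .node []

/-- Environment extension `Γ, x₀:T` (de Bruijn cons). -/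
def Env.cons (T : TreeTy) (Γ : Env) : Env
  | 0 => T
  | n+1 => Γ n

/-- Wrap a (non-empty) tree type in one extra sequence layer. -/
def TreeTy.wrap : TreeTy → TreeTy
  | .node [] => .node []
  | T => .node [.tree T]

/-- `[Γ]`: wrap each (non-empty) type of the environment in one extra layer. -/
def Env.wrap (Γ : Env) : Env := fun x => (Γ x).wrap

/-- Finite union of environments. -/
def Env.unionF {n : ℕ} (Γs : Fin n → Env) : Env :=
  (List.ofFn Γs).foldr Env.union Env.empty

/-- Tree type derivations. -/
inductive Deriv : Env → Term → GenTy → Type where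
  | var (x : ℕ) (A : LinTy) : Deriv (Env.single x A) (.var x) (.lin A)
  | lam {Γ : Env} {T : TreeTy} {t : Term} {A : LinTy} :
      Deriv (Env.cons T Γ) t (.lin A) → Deriv Γ (.lam t) (.lin (.arr T A))
  | lamStar (t : Term) : Deriv Env.empty (.lam t) (.lin .star)
  | app {Γ Δ : Env} {t u : Term} {T : TreeTy} {A : LinTy} :
      Deriv Γ t (.lin (.arr T A)) → Deriv Δ u (.tree T) →
      Deriv (Env.union Γ Δ) (.app t u) (.lin A)
  | many {t : Term} (n : ℕ) (Γs : Fin n → Env) (Gs : Fin n → GenTy)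
      (prems : ∀ i, Deriv (Γs i) t (Gs i)) :
      Deriv (Env.wrap (Env.unionF Γs)) t (.tree (.node (List.ofFn Gs)))
  | none (t : Term) : Deriv Env.empty t (.tree (.node []))

/-- Size of a derivation: number of rules that are not T-many/T-none. -/
def Deriv.size : ∀ {Γ t G}, Deriv Γ t G → ℕ
  | _, _, _, .var _ _ => 1
  | _, _, _, .lam π => π.size + 1
  | _, _, _, .lamStar _ => 1
  | _, _, _, .app π ρ => π.size + ρ.size + 1
  | _, _, _, .many n _ _ prems => ∑ i : Fin n, (prems i).size
  | _, _, _, .none _ => 0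

/-- Weight of a weighted derivation, with parameter `X`. -/
def Deriv.weight (X : ℕ) : ∀ {Γ t G}, Deriv Γ t G → ℕ
  | _, _, _, .var _ A => A.weight X
  | _, _, _, .lam (T := T) (A := A) π => max (π.weight X) (LinTy.weight X (.arr T A))
  | _, _, _, .lamStar _ => 0
  | _, _, _, .app π ρ => max (π.weight X) (ρ.weight X)
  | _, _, _, .many n _ _ prems => X + (Finset.univ.sup fun i => (prems i).weight X)
  | _, _, _, .none _ => 0

/-- `SubD π n π'`: the judgment of `π'` occurs in `π`, crossing `n` T-many rules
descending from it to the root. -/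
inductive SubD : ∀ {Γ t G}, Deriv Γ t G → ℕ → ∀ {Γ' u G'}, Deriv Γ' u G' → Prop where
  | refl {Γ t G} (π : Deriv Γ t G) : SubD π 0 π
  | lam {Γ T t A} {π : Deriv (Env.cons T Γ) t (.lin A)} {n} {Γ' u G'} {π' : Deriv Γ' u G'} :
      SubD π n π' → SubD (Deriv.lam π) n π'
  | appL {Γ Δ t u T A} {π : Deriv Γ t (.lin (.arr T A))} {ρ : Deriv Δ u (.tree T)}
      {n} {Γ' v G'} {π' : Deriv Γ' v G'} :
      SubD π n π' → SubD (Deriv.app π ρ) n π'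
  | appR {Γ Δ t u T A} {π : Deriv Γ t (.lin (.arr T A))} {ρ : Deriv Δ u (.tree T)}
      {n} {Γ' v G'} {π' : Deriv Γ' v G'} :
      SubD ρ n π' → SubD (Deriv.app π ρ) n π'
  | many {t k} {Γs : Fin k → Env} {Gs : Fin k → GenTy} {prems : ∀ i, Deriv (Γs i) t (Gs i)}
      (i : Fin k) {n} {Γ' u G'} {π' : Deriv Γ' u G'} :
      SubD (prems i) n π' → SubD (Deriv.many k Γs Gs prems) (n+1) π'

/-- The sparse tree types of Turing's fixed-point combinator:
`𝕋₀ = [ [] → A₀ ]` and `𝕋_{n+1} = [ [Aₙ] → A_{n+1}, [𝕋ₙ] ]`. -/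
def Tfam (As : ℕ → LinTy) : ℕ → TreeTy
  | 0 => .node [.lin (.arr (.node []) (As 0))]
  | n+1 => .node [.lin (.arr (.node [.lin (As n)]) (As (n+1))),
                  .tree (.node [.tree (Tfam As n)])]

/-- `θ := λx.λy.y (x x y)` (de Bruijn). -/
def theta : Term :=
  .lam (.lam (.app (.var 0) (.app (.app (.var 1) (.var 1)) (.var 0))))

/-- Turing's fixed-point combinator `Θ := θ θ`. -/
def Theta : Term := .app theta theta

/-!
The first copy of `θ` is typed `Sₙ → 𝔽ₙ`, where the tree type `Sₙ` collects the types at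
which its bound variable `x` is used along the `n` unfoldings: the body `y (x x y)` needs
`x : Sₙ₋₁ → 𝔽ₙ₋₁` in head position and `x : Sₙ₋₁` as an argument. The second copy of `θ` is
then typed by `Sₙ`, built from the derivations of the first copy at all smaller indices.
The weight of the derivation dominates the weight of the type `𝔽ₙ` appearing at its
abstraction rule, and `𝕋ₙ` nests `2n+1` sequence layers, each contributing `X`.
-/

def Env.only (x : ℕ) (T : TreeTy) : Env := fun y => if y = x then T else .node []

namespace Env

@[simp] lemma single_eq_only (x : ℕ) (A : LinTy) :
    Env.single x A = Env.only x (.node [.lin A]) := rfl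

@[simp] lemma only_nil (x : ℕ) : Env.only x (.node []) = Env.empty := by
  funext y; simp [Env.only, Env.empty]

@[simp] lemma union_only (x : ℕ) (S T : TreeTy) :
    Env.union (Env.only x S) (Env.only x T) = Env.only x (S.cat T) := by
  funext y
  by_cases h : y = x
  · simp [Env.union, Env.only, h]
  · simp [Env.union, Env.only, TreeTy.cat, h]

@[simp] lemma wrap_only (x : ℕ) (T : TreeTy) :
    Env.wrap (Env.only x T) = Env.only x T.wrap := by
  funext y
  by_cases h : y = x
  · simp [Env.wrap, Env.only, h]
  · simp [Env.wrap, Env.only, TreeTy.wrap, h]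

@[simp] lemma union_empty (Γ : Env) : Env.union Γ Env.empty = Γ := by
  funext x
  cases h : Γ x
  simp [Env.union, Env.empty, TreeTy.cat, h]

@[simp] lemma unionF_one (Γ : Env) : Env.unionF (fun _ : Fin 1 => Γ) = Γ := by
  simp [Env.unionF]

@[simp] lemma unionF_two (Γ₁ Γ₂ : Env) : Env.unionF ![Γ₁, Γ₂] = Env.union Γ₁ Γ₂ := by
  simp [Env.unionF]

end Env

@[simp] lemma TreeTy.cat_node (a b : List GenTy) :
    (TreeTy.node a).cat (.node b) = .node (a ++ b) := rfl

@[simp] lemma TreeTy.wrap_nil : (TreeTy.node []).wrap = .node [] := rfl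

@[simp] lemma TreeTy.wrap_cons (g : GenTy) (gs : List GenTy) :
    (TreeTy.node (g :: gs)).wrap = .node [.tree (.node (g :: gs))] := rfl

namespace Deriv

def cast {Γ Γ' : Env} {t : Term} {G : GenTy} (π : Deriv Γ t G) (h : Γ = Γ') : Deriv Γ' t G :=
  h ▸ π

def one {Γ : Env} {t : Term} {G : GenTy} (π : Deriv Γ t G) :
    Deriv (Env.wrap Γ) t (.tree (.node [G])) :=
  (List.ofFn_const 1 G ▸ Deriv.many 1 (fun _ => Γ) (fun _ => G) (fun _ => π)).cast (by simp)

def two {Γ₁ Γ₂ : Env} {t : Term} {G₁ G₂ : GenTy} (π₁ : Deriv Γ₁ t G₁) (π₂ : Deriv Γ₂ t G₂) :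
    Deriv (Env.wrap (Env.union Γ₁ Γ₂)) t (.tree (.node [G₁, G₂])) :=
  have hGs : List.ofFn ![G₁, G₂] = [G₁, G₂] := by simp
  (hGs ▸ Deriv.many 2 ![Γ₁, Γ₂] ![G₁, G₂] (Fin.cons π₁ (Fin.cons π₂ finZeroElim))).cast
    (by simp)

end Deriv

lemma TreeTy.weight_node (X : ℕ) (gs : List GenTy) :
    TreeTy.weight X (.node gs) = X + (gs.map (GenTy.weight X)).foldr max 0 := by
  rw [TreeTy.weight, List.map_attach_eq_pmap, List.pmap_eq_map]

lemma LinTy.weight_le_weight_arr (X : ℕ) (T : TreeTy) (A : LinTy) :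
    T.weight X ≤ LinTy.weight X (.arr T A) := by
  rw [LinTy.weight]
  omega

lemma LinTy.weight_lt_weight_arr (X : ℕ) (T : TreeTy) (A : LinTy) :
    A.weight X < LinTy.weight X (.arr T A) := by
  rw [LinTy.weight]
  omega

lemma Deriv.weight_type_le_weight_lam (X : ℕ) {Γ : Env} {T : TreeTy} {t : Term} {A : LinTy}
    (π : Deriv (Env.cons T Γ) t (.lin A)) :
    LinTy.weight X (.arr T A) ≤ (Deriv.lam π).weight X :=
  le_max_right _ _

lemma Deriv.weight_left_le_weight_app (X : ℕ) {Γ Δ : Env} {t u : Term} {T : TreeTy}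
    {A : LinTy} (π : Deriv Γ t (.lin (.arr T A))) (ρ : Deriv Δ u (.tree T)) :
    π.weight X ≤ (Deriv.app π ρ).weight X :=
  le_max_left _ _

def Ffam (As : ℕ → LinTy) (n : ℕ) : LinTy := .arr (Tfam As n) (As n)

/-- The type `Sₙ` of the bound variable `x` of `θ` in `θ : Sₙ → 𝔽ₙ`. -/
def Sfam (As : ℕ → LinTy) : ℕ → TreeTy
  | 0 => .node []
  | 1 => .node [.tree (.node [.lin (.arr (.node []) (Ffam As 0))])]
  | n+2 => .node [.tree (.node [.lin (.arr (Sfam As (n+1)) (Ffam As (n+1))),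
                               .tree (Sfam As (n+1))])]

@[simp] lemma Sfam_succ_wrap (As : ℕ → LinTy) (n : ℕ) :
    (Sfam As (n+1)).wrap = .node [.tree (Sfam As (n+1))] := by
  cases n <;> rfl

def varTfam (As : ℕ → LinTy) (x : ℕ) :
    ∀ n, Deriv (Env.only x (.node [.tree (Tfam As n)])) (.var x) (.tree (Tfam As n))
  | 0 => (Deriv.one (Deriv.var x _)).cast (by simp [Tfam])
  | n+1 => (Deriv.two (Deriv.var x _) (Deriv.one (varTfam As x n))).cast (by simp [Tfam])

def varSfam (As : ℕ → LinTy) (x : ℕ) :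
    ∀ n, Deriv (Env.only x (Sfam As n).wrap) (.var x) (.tree (Sfam As n))
  | 0 => (Deriv.none (.var x)).cast (by simp [Sfam])
  | 1 => (Deriv.one (Deriv.one (Deriv.var x _))).cast (by simp [Sfam])
  | n+2 => (Deriv.one (Deriv.two (Deriv.var x _) (varSfam As x (n+1)))).cast (by simp [Sfam])

def thetaBody (As : ℕ → LinTy) :
    ∀ n, Deriv (Env.cons (Tfam As n) (Env.cons (Sfam As n) Env.empty))
      (.app (.var 0) (.app (.app (.var 1) (.var 1)) (.var 0))) (.lin (As n))
  | 0 => (Deriv.app (Deriv.var 0 (.arr (.node []) (As 0))) (Deriv.none _)).cast <| by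
      funext y; rcases y with _ | _ | y <;> simp [Env.only, Env.cons, Env.empty, Tfam, Sfam]
  | n+1 =>
    (Deriv.app (Deriv.var 0 (.arr (.node [.lin (As n)]) (As (n+1))))
      (Deriv.one (Deriv.app (Deriv.app (Deriv.var 1 (.arr (Sfam As n) (Ffam As n)))
        (varSfam As 1 n)) (varTfam As 0 n)))).cast <| by
      funext y
      rcases y with _ | _ | y <;> cases n <;>
        simp [Env.union, Env.wrap, Env.only, Env.cons, Env.empty, Tfam, Sfam]

def thetaLin (As : ℕ → LinTy) (n : ℕ) :
    Deriv Env.empty theta (.lin (.arr (Sfam As n) (Ffam As n))) :=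
  .lam (.lam (thetaBody As n))

def thetaTree (As : ℕ → LinTy) : ∀ n, Deriv Env.empty theta (.tree (Sfam As n))
  | 0 => .none theta
  | 1 => (Deriv.one (Deriv.one (thetaLin As 0))).cast (by funext; rfl)
  | n+2 => (Deriv.one (Deriv.two (thetaLin As (n+1)) (thetaTree As (n+1)))).cast (by funext; rfl)

lemma le_weight_Tfam (X : ℕ) (As : ℕ → LinTy) : ∀ n, (2*n+1) * X ≤ (Tfam As n).weight X
  | 0 => by simp [Tfam, TreeTy.weight_node]
  | n+1 => by
    have ih := le_weight_Tfam X As n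
    simp only [Tfam, TreeTy.weight_node, GenTy.weight, List.map, List.foldr]
    have hcoeff : (2*(n+1)+1) * X = X + X + (2*n+1) * X := by ring
    omega

/-- `Θ` is typable with `𝔽ₙ := 𝕋ₙ → Aₙ` at a weight `≥ (2n+1)·X`. -/
theorem Theta_typable_sparse (X : ℕ) (As : ℕ → LinTy) (n : ℕ) :
    ∃ π : Deriv Env.empty Theta (.lin (.arr (Tfam As n) (As n))),
      (2*n+1) * X ≤ π.weight X := by
  refine ⟨.app (thetaLin As n) (thetaTree As n), ?_⟩
  calc (2*n+1) * X ≤ (Tfam As n).weight X := le_weight_Tfam X As n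
    _ ≤ (Ffam As n).weight X := LinTy.weight_le_weight_arr X _ _
    _ ≤ LinTy.weight X (.arr (Sfam As n) (Ffam As n)) :=
      (LinTy.weight_lt_weight_arr X _ _).le
    _ ≤ (thetaLin As n).weight X := Deriv.weight_type_le_weight_lam X _
    _ ≤ _ := Deriv.weight_left_le_weight_app X _ _
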